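/- Let κ be a unital linear form on T(A) (i.e. a linear form, from which the standard section sd(κ) on NC(A) is built), and let Ψ be the unique solution in linear forms on T̄(NC(A)) of Ψ = e + sd(κ) ≺ Ψ. Then for every n ≥ 1, every non-crossing partition L = {L₁,…,L_k} of [n], and all a₁,…,aₙ ∈ A: Ψ(L⊗(a₁⋯aₙ)) = ∏_{i=1}^{k} κ(a_{L_i}); consequently Ψ(Sp(a₁⋯aₙ)) = Σ_{L∈NC_n} κ^L(a₁⋯aₙ), where κ^L(a₁⋯aₙ) := ∏_{i} κ(a_{L_i}). -/

import Mathlib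

open scoped TensorProduct

/-- The data of a collection of blocks (finite sets of natural numbers). -/
abbrev PartData : Type := Finset (Finset ℕ)

/-- The non-crossing condition on a collection of blocks: there are no
`p₁ < q₁ < p₂ < q₂` with `p₁, p₂` in one block and `q₁, q₂` in a different block. -/
def NoCrossing (P : PartData) : Prop :=
  ∀ B ∈ P, ∀ B' ∈ P, B ≠ B' →
    ∀ p₁ ∈ B, ∀ p₂ ∈ B, ∀ q₁ ∈ B', ∀ q₂ ∈ B',
      ¬ (p₁ < q₁ ∧ q₁ < p₂ ∧ p₂ < q₂)

instance (P : PartData) : Decidable (NoCrossing P) := by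
  unfold NoCrossing; exact inferInstance

/-- `NestedIn B B'` is the relation `B <_L B'`: every element of `B` lies strictly
between `min B'` and `max B'`. -/
def NestedIn (B B' : Finset ℕ) : Prop :=
  ∀ m ∈ B, (∃ a ∈ B', a < m) ∧ (∃ b ∈ B', m < b)

instance (B B' : Finset ℕ) : Decidable (NestedIn B B') := by
  unfold NestedIn; exact inferInstance

/-- Admissibility of a decomposition of the blocks into `Q` and `U`:
no block of `Q` is `<_L` any block of `U`. -/
def Adm (Q U : PartData) : Prop := ∀ q ∈ Q, ∀ u ∈ U, ¬ NestedIn q u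

instance (Q U : PartData) : Decidable (Adm Q U) := by
  unfold Adm; exact inferInstance

/-- `P` is a non-crossing set partition of `{0, 1, …, n-1}`. -/
def IsNCP (n : ℕ) (P : PartData) : Prop :=
  ∅ ∉ P ∧ (∀ B ∈ P, ∀ B' ∈ P, B ≠ B' → Disjoint B B') ∧
    P.sup id = Finset.range n ∧ NoCrossing P

instance (n : ℕ) (P : PartData) : Decidable (IsNCP n P) := by
  unfold IsNCP; exact inferInstance

/-- The rank of `x` in `S` (the standardization map: the unique increasing
bijection from `S` onto `{0, …, |S|-1}`). -/
def rk (S : Finset ℕ) (x : ℕ) : ℕ := (S.filter (· < x)).card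

/-- Standardization of a collection of blocks, via the rank map of its ground set. -/
def stdParts (P : PartData) : PartData := P.image fun B => B.image (rk (P.sup id))

/-- The connected component of `x` in `T` relative to the separating set `S`. -/
def compOf (S T : Finset ℕ) (x : ℕ) : Finset ℕ :=
  T.filter fun y => ∀ s ∈ S, ¬ (min x y < s ∧ s < max x y)

/-- The ordered list of connected components of `T` relative to the separating set `S`. -/
def comps (S T : Finset ℕ) : List (Finset ℕ) :=
  ((T.sort (· ≤ ·)).map (compOf S T)).dedup

/-- The finite set of all non-crossing partitions of `{0, …, n-1}`. -/
def NCset (n : ℕ) : Finset PartData :=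
  ((Finset.range n).powerset.powerset).filter (IsNCP n)

noncomputable section

/-- `NC(A) = ⊕_{n ≥ 1} (span of partition data) ⊗ A^{⊗n}`: the space of `A`-decorated
(non-crossing) partitions; the genuine non-crossing ones are singled out by `IsNCP`. -/
abbrev NCA (K : Type*) [Field K] (A : Type*) [Ring A] [Algebra K A] : Type _ :=
  DirectSum (PartData × ℕ) fun p => PiTensorProduct K fun _ : Fin (p.2 + 1) => A

/-- `T̄(NC(A))`: the tensor algebra over the space of decorated non-crossing partitions. -/
abbrev TNA (K : Type*) [Field K] (A : Type*) [Ring A] [Algebra K A] : Type _ :=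
  TensorAlgebra K (NCA K A)

variable (K : Type*) [Field K] (A : Type*) [Ring A] [Algebra K A]

/-- The decorated partition `P ⊗ (a₀ ⋯ a_k)` as an element of the module `NC(A)`. -/
def dvec (P : PartData) (k : ℕ) (a : ℕ → A) : NCA K A :=
  DirectSum.of (fun p : PartData × ℕ => PiTensorProduct K fun _ : Fin (p.2 + 1) => A)
    (P, k) (PiTensorProduct.tprod K fun i : Fin (k + 1) => a (i : ℕ))

/-- The decorated partition `P ⊗ (a₀ ⋯ a_{m-1})` (decoration of length `m`) as a single
bar-letter of `T̄(NC(A))`; length `0` gives the unit. -/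
def dgen (P : PartData) (m : ℕ) (a : ℕ → A) : TNA K A :=
  match m with
  | 0 => 1
  | k + 1 => TensorAlgebra.ι K (dvec K A P k a)

/-- The decorated standardized piece `P' ⊗ a_S`: the partition `P'` decorated by the
letters of `a` indexed by `S`, in increasing order. -/
def dsub (a : ℕ → A) (P' : PartData) (S : Finset ℕ) : TNA K A :=
  dgen K A P' S.card fun j => a ((S.sort (· ≤ ·)).getD j 0)

/-- The value of the coproduct on a decorated non-crossing partition `L ⊗ (a₀ ⋯ a_{n-1})`:
`Σ_{L = Q ⊔_adm U} (st(Q) ⊗ a_Q) ⊗ (st(J₁^{L,Q}) ⊗ a_{J₁^{L,Q}} | ⋯ )`. -/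
def dcopF (P : PartData) (a : ℕ → A) : TNA K A ⊗[K] TNA K A :=
  ∑ Q ∈ P.powerset.filter (fun Q => Adm Q (P \ Q)),
    dsub K A a (stdParts Q) (Q.sup id) ⊗ₜ[K]
      ((comps (Q.sup id) (P.sup id \ Q.sup id)).map fun J =>
        dsub K A a (stdParts ((P \ Q).filter (· ⊆ J))) J).prod

/-- The value of the left half-coproduct `Δ_≺⁺`: the part of the sum where the block
containing the first element (here `0`) lies in `Q`. -/
def dcopP (P : PartData) (a : ℕ → A) : TNA K A ⊗[K] TNA K A :=
  ∑ Q ∈ P.powerset.filter (fun Q => Adm Q (P \ Q) ∧ ∃ q ∈ Q, 0 ∈ q),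
    dsub K A a (stdParts Q) (Q.sup id) ⊗ₜ[K]
      ((comps (Q.sup id) (P.sup id \ Q.sup id)).map fun J =>
        dsub K A a (stdParts ((P \ Q).filter (· ⊆ J))) J).prod

/-- The value of the right half-coproduct `Δ_≻⁺`: the part of the sum where the block
containing the first element (here `0`) lies in `U`. -/
def dcopS (P : PartData) (a : ℕ → A) : TNA K A ⊗[K] TNA K A :=
  ∑ Q ∈ P.powerset.filter (fun Q => Adm Q (P \ Q) ∧ ∃ u ∈ P \ Q, 0 ∈ u),
    dsub K A a (stdParts Q) (Q.sup id) ⊗ₜ[K]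
      ((comps (Q.sup id) (P.sup id \ Q.sup id)).map fun J =>
        dsub K A a (stdParts ((P \ Q).filter (· ⊆ J))) J).prod

/-- The set of bar-words of genuine decorated non-crossing partitions in `T̄(NC(A))`. -/
def DWord : Set (TNA K A) :=
  {x | ∃ l : List (PartData × ℕ × (ℕ → A)),
        (∀ t ∈ l, 1 ≤ t.2.1 ∧ IsNCP t.2.1 t.1) ∧
        x = (l.map fun t => dgen K A t.1 t.2.1 t.2.2).prod}

/-- The set of nonempty bar-words of genuine decorated non-crossing partitions. -/
def DWordPos : Set (TNA K A) :=
  {x | ∃ l : List (PartData × ℕ × (ℕ → A)), l ≠ [] ∧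
        (∀ t ∈ l, 1 ≤ t.2.1 ∧ IsNCP t.2.1 t.1) ∧
        x = (l.map fun t => dgen K A t.1 t.2.1 t.2.2).prod}

/-- `T̄(NC(A))` proper: the span of all words of genuine decorated non-crossing
partitions. -/
def DSpan : Submodule K (TNA K A) := Submodule.span K (DWord K A)

/-- `T(NC(A))`: the augmentation ideal, the span of all nonempty words of genuine
decorated non-crossing partitions. -/
def DIdeal : Submodule K (TNA K A) := Submodule.span K (DWordPos K A)

/-- The augmentation (counit) `e` of `T̄(NC(A))`: `e(1) = 1`, `e = 0` on `T(NC(A))`. -/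
def augD : TNA K A →ₐ[K] K := TensorAlgebra.lift K (0 : NCA K A →ₗ[K] K)

/-- Half-convolution / convolution of linear forms with respect to a (half-)coproduct
`D` on `T̄(NC(A))`: `f ⋆_D g := m_K ∘ (f ⊗ g) ∘ D`. -/
def convD (D : TNA K A →ₗ[K] TNA K A ⊗[K] TNA K A) (f g : TNA K A →ₗ[K] K) :
    TNA K A →ₗ[K] K :=
  LinearMap.mul' K K ∘ₗ TensorProduct.map f g ∘ₗ D

/-- The linear map `x ↦ x ⊗ 1` on `T̄(NC(A))`. -/
def rOneD : TNA K A →ₗ[K] TNA K A ⊗[K] TNA K A :=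
  (TensorProduct.mk K (TNA K A) (TNA K A)).flip 1

/-- The linear map `x ↦ 1 ⊗ x` on `T̄(NC(A))`. -/
def lOneD : TNA K A →ₗ[K] TNA K A ⊗[K] TNA K A :=
  TensorProduct.mk K (TNA K A) (TNA K A) 1

end

noncomputable section

/-- `T(A) = ⊕_{n ≥ 1} A^{⊗n}`, the positive part of the tensor algebra over `A`. -/
abbrev Tpos (K : Type*) [Field K] (A : Type*) [Ring A] [Algebra K A] : Type _ :=
  DirectSum ℕ fun n => PiTensorProduct K fun _ : Fin (n + 1) => A

/-- `T̄(T(A))`: the double tensor algebra over `A`. -/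
abbrev TT (K : Type*) [Field K] (A : Type*) [Ring A] [Algebra K A] : Type _ :=
  TensorAlgebra K (Tpos K A)

variable (K : Type*) [Field K] (A : Type*) [Ring A] [Algebra K A]

/-- The word `a₀ ⋯ a_k` as an element of the module `T(A)`. -/
def tvec (k : ℕ) (a : ℕ → A) : Tpos K A :=
  DirectSum.of (fun n => PiTensorProduct K fun _ : Fin (n + 1) => A) k
    (PiTensorProduct.tprod K fun i : Fin (k + 1) => a (i : ℕ))

/-- The word `a₀ ⋯ a_{m-1}` (of length `m`) as a single bar-letter of `T̄(T(A))`;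
the empty word is the unit. -/
def wrd (m : ℕ) (a : ℕ → A) : TT K A :=
  match m with
  | 0 => 1
  | k + 1 => TensorAlgebra.ι K (tvec K A k a)

/-- The subword `a_S` of the letters indexed by `S`, in increasing order. -/
def sw (a : ℕ → A) (S : Finset ℕ) : TT K A :=
  wrd K A S.card fun j => a ((S.sort (· ≤ ·)).getD j 0)

/-- The value of the coproduct on a word of length `m`:
`Δ(a₀ ⋯ a_{m-1}) = Σ_{S ⊆ [m]} a_S ⊗ (a_{J₁}|⋯|a_{J_k})`, `J₁,…,J_k` the connected
components of `[m] − S`. -/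
def wcopF (m : ℕ) (a : ℕ → A) : TT K A ⊗[K] TT K A :=
  ∑ S ∈ (Finset.range m).powerset,
    sw K A a S ⊗ₜ[K] ((comps S (Finset.range m \ S)).map (sw K A a)).prod

/-- The value of the left half-coproduct `Δ_≺⁺` on a word: the part of the sum with
`S` containing the first position. -/
def wcopP (m : ℕ) (a : ℕ → A) : TT K A ⊗[K] TT K A :=
  ∑ S ∈ (Finset.range m).powerset.filter (fun S => 0 ∈ S),
    sw K A a S ⊗ₜ[K] ((comps S (Finset.range m \ S)).map (sw K A a)).prod

/-- The value of the right half-coproduct `Δ_≻⁺` on a word: the part of the sum with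
`S` not containing the first position. -/
def wcopS (m : ℕ) (a : ℕ → A) : TT K A ⊗[K] TT K A :=
  ∑ S ∈ (Finset.range m).powerset.filter (fun S => 0 ∉ S),
    sw K A a S ⊗ₜ[K] ((comps S (Finset.range m \ S)).map (sw K A a)).prod

/-- The augmentation ideal `T(T(A))` of `T̄(T(A))`. -/
def TIdeal : Submodule K (TT K A) :=
  Submodule.span K {x | ∃ (v : Tpos K A) (y : TT K A), x = TensorAlgebra.ι K v * y}

/-- The augmentation (counit) of `T̄(T(A))`. -/
def augT : TT K A →ₐ[K] K := TensorAlgebra.lift K (0 : Tpos K A →ₗ[K] K)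

/-- The linear map `x ↦ x ⊗ 1` on `T̄(T(A))`. -/
def rOneT : TT K A →ₗ[K] TT K A ⊗[K] TT K A :=
  (TensorProduct.mk K (TT K A) (TT K A)).flip 1

/-- The linear map `x ↦ 1 ⊗ x` on `T̄(T(A))`. -/
def lOneT : TT K A →ₗ[K] TT K A ⊗[K] TT K A :=
  TensorProduct.mk K (TT K A) (TT K A) 1

/-- Half-convolution / convolution of linear forms with respect to a (half-)coproduct `D`:
`f ⋆_D g := m_K ∘ (f ⊗ g) ∘ D`. -/
def convT (D : TT K A →ₗ[K] TT K A ⊗[K] TT K A) (f g : TT K A →ₗ[K] K) :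
    TT K A →ₗ[K] K :=
  LinearMap.mul' K K ∘ₗ TensorProduct.map f g ∘ₗ D

end

noncomputable section

variable (K : Type*) [Field K] (A : Type*) [Ring A] [Algebra K A]

/-- The value of the splitting map on a word:
`Sp(a₁⋯aₙ) = Σ_{L ∈ NC_n} L ⊗ (a₁⋯aₙ)`. -/
def spWord (m : ℕ) (a : ℕ → A) : TNA K A :=
  ∑ P ∈ NCset m, dgen K A P m a

end

/-- The word `a₀ ⋯ a_{m-1}` as an element of the module `T(A)` (zero for `m = 0`). -/
noncomputable def twrd (K : Type*) [Field K] (A : Type*) [Ring A] [Algebra K A]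
    (m : ℕ) (a : ℕ → A) : Tpos K A :=
  match m with
  | 0 => 0
  | k + 1 => tvec K A k a

/-!
Let `B₀` be the block of `L` containing the first point. Every left factor of `Δ_≺⁺(L ⊗ a)`
contains `B₀`, and `sd(κ)` vanishes on it unless it is `{B₀}` itself; and since `sd(κ)` is an
infinitesimal character, only the term `1 ⊗ y` of `Δ y` matters for the rest `y` of a word.
So `Ψ(L ⊗ a | y) = κ(a_{B₀}) Ψ(st(J₁) ⊗ a_{J₁} | ⋯ | st(J_r) ⊗ a_{J_r} | y)`, where the
`J_i` are the components of `[n] − B₀`; by non-crossingness each other block of `L` lies in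
exactly one `J_i`. Induction on the total length of the word makes `Ψ` multiplicative over
the blocks.
-/

open Finset

section Rank

lemma rk_mono (S : Finset ℕ) : Monotone (rk S) := fun _ _ hxy =>
  card_le_card fun _ hz => by
    simp only [mem_filter] at hz ⊢
    exact ⟨hz.1, hz.2.trans_le hxy⟩

lemma rk_lt_rk {S : Finset ℕ} {x y : ℕ} (hx : x ∈ S) (hxy : x < y) : rk S x < rk S y := by
  refine card_lt_card ((ssubset_iff_of_subset fun z hz => ?_).2 ⟨x, ?_, ?_⟩)
  · simp only [mem_filter] at hz ⊢
    exact ⟨hz.1, hz.2.trans hxy⟩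
  · simp [hx, hxy]
  · simp

lemma lt_of_rk_lt_rk {S : Finset ℕ} {x y : ℕ} (h : rk S x < rk S y) : x < y :=
  lt_of_not_ge fun hyx => (rk_mono S hyx).not_gt h

lemma rk_injOn (S : Finset ℕ) : Set.InjOn (rk S) S := by
  intro x hx y hy h
  rcases lt_trichotomy x y with hl | he | hl
  · exact absurd h (rk_lt_rk hx hl).ne
  · exact he
  · exact absurd h (rk_lt_rk hy hl).ne'

lemma rk_lt_card {S : Finset ℕ} {x : ℕ} (hx : x ∈ S) : rk S x < S.card :=
  card_lt_card ((ssubset_iff_of_subset (filter_subset _ _)).2 ⟨x, hx, by simp⟩)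

lemma image_rk_self (S : Finset ℕ) : S.image (rk S) = range S.card :=
  eq_of_subset_of_card_le
    (fun _ hz => by
      obtain ⟨x, hx, rfl⟩ := mem_image.1 hz
      exact mem_range.2 (rk_lt_card hx))
    (by rw [card_range, card_image_of_injOn (rk_injOn S)])

lemma rk_range {n x : ℕ} (hx : x < n) : rk (range n) x = x := by
  have : (range n).filter (· < x) = range x := by
    ext z
    simp only [mem_filter, mem_range]
    omega
  rw [rk, this, card_range]

lemma List.getD_countP_lt_of_pairwise_lt {l : List ℕ} (hl : l.Pairwise (· < ·)) {x : ℕ}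
    (hx : x ∈ l) : l.getD (l.countP fun y => decide (y < x)) 0 = x := by
  induction l with
  | nil => cases hx
  | cons a t ih =>
    obtain ⟨ha, ht⟩ := List.pairwise_cons.1 hl
    rcases List.mem_cons.1 hx with rfl | hx
    · have h0 : (x :: t).countP (fun y => decide (y < x)) = 0 :=
        List.countP_eq_zero.2 fun y hy => by
          rcases List.mem_cons.1 hy with rfl | hy
          · simp
          · simpa using (ha y hy).le
      rw [h0]
      rfl
    · rw [List.countP_cons_of_pos (by simpa using ha x hx)]
      simpa using ih ht hx

lemma getD_sort_rk {S : Finset ℕ} {x : ℕ} (hx : x ∈ S) :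
    (S.sort (· ≤ ·)).getD (rk S x) 0 = x := by
  have hcount : rk S x = (S.sort (· ≤ ·)).countP fun y => decide (y < x) := by
    rw [rk, card_def, filter_val, ← Multiset.countP_eq_card_filter,
      ← sort_eq S (· ≤ ·), Multiset.coe_countP]
  rw [hcount]
  exact List.getD_countP_lt_of_pairwise_lt (sortedLT_sort S).pairwise ((mem_sort _).2 hx)

lemma sort_image_of_strictMonoOn {S : Finset ℕ} {f : ℕ → ℕ} (hf : StrictMonoOn f S) :
    (S.image f).sort (· ≤ ·) = (S.sort (· ≤ ·)).map f := by
  have : Std.Antisymm (α := ℕ) (· < ·) := ⟨fun _ _ h h' => (lt_asymm h h').elim⟩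
  refine List.Perm.eq_of_pairwise' (r := (· < ·)) (sortedLT_sort _).pairwise ?_ ?_
  · rw [List.pairwise_map]
    exact (sortedLT_sort S).pairwise.imp_of_mem fun ha hb h =>
      hf ((mem_sort _).1 ha) ((mem_sort _).1 hb) h
  · rw [← Multiset.coe_eq_coe, sort_eq, ← Multiset.map_coe, sort_eq]
    exact image_val_of_injOn hf.injOn

lemma getD_sort_range {n j : ℕ} (hj : j < n) : ((range n).sort (· ≤ ·)).getD j 0 = j := by
  rw [sort_range, List.getD_eq_getElem _ _ (by simpa using hj)]
  simp

lemma getD_sort_mem {B : Finset ℕ} {j : ℕ} (hj : j < B.card) :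
    (B.sort (· ≤ ·)).getD j 0 ∈ B := by
  have hlen : j < (B.sort (· ≤ ·)).length := by rwa [length_sort]
  rw [List.getD_eq_getElem _ _ hlen]
  exact (mem_sort _).1 (List.getElem_mem _)

end Rank

/-- The subword `a_S`. -/
def restrictDec {α : Type*} (a : ℕ → α) (S : Finset ℕ) : ℕ → α :=
  fun j => a ((S.sort (· ≤ ·)).getD j 0)

lemma restrictDec_range {α : Type*} (a : ℕ → α) {n j : ℕ} (hj : j < n) :
    restrictDec a (range n) j = a j := by
  rw [restrictDec, getD_sort_range hj]

lemma restrictDec_image_rk {α : Type*} (a : ℕ → α) {B J : Finset ℕ} (hBJ : B ⊆ J) {j : ℕ}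
    (hj : j < B.card) :
    restrictDec (restrictDec a J) (B.image (rk J)) j = restrictDec a B j := by
  have hmono : StrictMonoOn (rk J) B := fun x hx _ _ hxy => rk_lt_rk (hBJ hx) hxy
  have hlen : j < (B.sort (· ≤ ·)).length := by rwa [length_sort]
  have hmap : ((B.sort (· ≤ ·)).map (rk J)).getD j 0 = rk J ((B.sort (· ≤ ·)).getD j 0) := by
    rw [List.getD_eq_getElem _ _ (by simpa using hlen), List.getD_eq_getElem _ _ hlen,
      List.getElem_map]
  simp only [restrictDec]
  rw [sort_image_of_strictMonoOn hmono, hmap, getD_sort_rk (hBJ (getD_sort_mem hj))]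

section Standardization

/-- The conditions of `IsNCP` that survive passing to a subfamily of blocks. -/
structure IsNCFamily (Q : PartData) : Prop where
  empty_notMem : ∅ ∉ Q
  disjoint : ∀ B ∈ Q, ∀ B' ∈ Q, B ≠ B' → Disjoint B B'
  noCrossing : NoCrossing Q

lemma IsNCP.isNCFamily {n : ℕ} {P : PartData} (h : IsNCP n P) : IsNCFamily P :=
  ⟨h.1, h.2.1, h.2.2.2⟩

lemma IsNCFamily.mono {P Q : PartData} (h : IsNCFamily P) (hQ : Q ⊆ P) : IsNCFamily Q :=
  ⟨fun he => h.empty_notMem (hQ he),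
   fun B hB B' hB' => h.disjoint B (hQ hB) B' (hQ hB'),
   fun B hB B' hB' => h.noCrossing B (hQ hB) B' (hQ hB')⟩

lemma IsNCFamily.nonempty {Q : PartData} (h : IsNCFamily Q) {B : Finset ℕ} (hB : B ∈ Q) :
    B.Nonempty :=
  nonempty_iff_ne_empty.2 fun he => h.empty_notMem (he ▸ hB)

lemma subset_sup_id {Q : PartData} {B : Finset ℕ} (hB : B ∈ Q) : B ⊆ Q.sup id :=
  le_sup (f := id) hB

lemma IsNCFamily.injOn_image_rk {Q : PartData} (h : IsNCFamily Q) :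
    Set.InjOn (fun B : Finset ℕ => B.image (rk (Q.sup id))) Q := by
  intro B hB B' hB' he
  by_contra hne
  obtain ⟨x, hx⟩ := h.nonempty hB
  have hxB' : rk (Q.sup id) x ∈ B'.image (rk (Q.sup id)) := by
    simp only at he
    exact he ▸ mem_image_of_mem _ hx
  obtain ⟨y, hy, hxy⟩ := mem_image.1 hxB'
  obtain rfl := rk_injOn _ (subset_sup_id hB' hy) (subset_sup_id hB hx) hxy
  exact disjoint_left.1 (h.disjoint B hB B' hB' hne) hx hy

lemma IsNCFamily.card_stdParts {Q : PartData} (h : IsNCFamily Q) :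
    (stdParts Q).card = Q.card :=
  card_image_of_injOn h.injOn_image_rk

lemma IsNCFamily.isNCP_stdParts {Q : PartData} (h : IsNCFamily Q) :
    IsNCP (Q.sup id).card (stdParts Q) := by
  refine ⟨fun he => ?_, ?_, ?_, ?_⟩
  · obtain ⟨B, hB, hBe⟩ := mem_image.1 he
    exact ((h.nonempty hB).image _).ne_empty hBe
  · intro C hC C' hC' hne
    obtain ⟨B, hB, rfl⟩ := mem_image.1 hC
    obtain ⟨B', hB', rfl⟩ := mem_image.1 hC'
    rw [disjoint_left]
    rintro _ hz hz'
    obtain ⟨x, hx, rfl⟩ := mem_image.1 hz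
    obtain ⟨y, hy, hxy⟩ := mem_image.1 hz'
    obtain rfl := rk_injOn _ (subset_sup_id hB' hy) (subset_sup_id hB hx) hxy
    exact disjoint_left.1 (h.disjoint B hB B' hB' fun hBB => hne (hBB ▸ rfl)) hx hy
  · rw [← image_rk_self]
    ext z
    simp only [stdParts, mem_sup, mem_image, id]
    aesop
  · intro C hC C' hC' hne p₁ hp₁ p₂ hp₂ q₁ hq₁ q₂ hq₂ hcr
    obtain ⟨B, hB, rfl⟩ := mem_image.1 hC
    obtain ⟨B', hB', rfl⟩ := mem_image.1 hC'
    obtain ⟨x₁, hx₁, rfl⟩ := mem_image.1 hp₁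
    obtain ⟨x₂, hx₂, rfl⟩ := mem_image.1 hp₂
    obtain ⟨y₁, hy₁, rfl⟩ := mem_image.1 hq₁
    obtain ⟨y₂, hy₂, rfl⟩ := mem_image.1 hq₂
    exact h.noCrossing B hB B' hB' (fun hc => hne (by rw [hc])) x₁ hx₁ x₂ hx₂ y₁ hy₁ y₂ hy₂
      ⟨lt_of_rk_lt_rk hcr.1, lt_of_rk_lt_rk hcr.2.1, lt_of_rk_lt_rk hcr.2.2⟩

lemma stdParts_singleton (B : Finset ℕ) : stdParts {B} = {range B.card} := by
  rw [stdParts, image_singleton, sup_singleton, id, image_rk_self]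

lemma stdParts_of_sup_eq_range {n : ℕ} {P : PartData} (hsup : P.sup id = range n) :
    stdParts P = P := by
  rw [stdParts, hsup]
  refine (image_congr fun B hB => ?_).trans image_id
  have hBr : B ⊆ range n := hsup ▸ subset_sup_id hB
  exact (image_congr fun x hx => rk_range (mem_range.1 (hBr hx))).trans image_id

lemma isNCP_singleton_range (k : ℕ) : IsNCP (k + 1) {range (k + 1)} := by
  refine ⟨fun h => ?_, ?_, sup_singleton, ?_⟩
  · exact (nonempty_range_iff.2 k.succ_ne_zero).ne_empty (mem_singleton.1 h).symm
  · intro B hB B' hB' hne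
    exact absurd ((mem_singleton.1 hB).trans (mem_singleton.1 hB').symm) hne
  · intro B hB B' hB' hne
    exact absurd ((mem_singleton.1 hB).trans (mem_singleton.1 hB').symm) hne

end Standardization

section Components

variable {S T : Finset ℕ}

lemma mem_compOf_self {x : ℕ} (hx : x ∈ T) : x ∈ compOf S T x :=
  mem_filter.2 ⟨hx, fun _ _ h => by omega⟩

lemma compOf_subset (x : ℕ) : compOf S T x ⊆ T := filter_subset _ _

lemma mem_compOf_comm {x y : ℕ} (hx : x ∈ T) (hy : y ∈ compOf S T x) : x ∈ compOf S T y := by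
  rw [compOf, mem_filter] at *
  exact ⟨hx, fun s hs h => hy.2 s hs (by omega)⟩

lemma mem_compOf_trans (hST : Disjoint S T) {x y z : ℕ} (hy : y ∈ compOf S T x)
    (hz : z ∈ compOf S T y) : z ∈ compOf S T x := by
  rw [compOf, mem_filter] at *
  refine ⟨hz.1, fun s hs h => ?_⟩
  have hys : y ≠ s := fun hc => disjoint_left.1 hST hs (hc ▸ hy.1)
  have h1 := hy.2 s hs
  have h2 := hz.2 s hs
  omega

lemma compOf_eq_of_mem (hST : Disjoint S T) {x y : ℕ} (hx : x ∈ T) (hy : y ∈ compOf S T x) :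
    compOf S T y = compOf S T x := by
  ext z
  exact ⟨mem_compOf_trans hST hy, mem_compOf_trans hST (mem_compOf_comm hx hy)⟩

lemma mem_comps_iff {J : Finset ℕ} : J ∈ comps S T ↔ ∃ x ∈ T, J = compOf S T x := by
  simp only [comps, List.mem_dedup, List.mem_map, mem_sort, eq_comm]

lemma compOf_mem_comps {x : ℕ} (hx : x ∈ T) : compOf S T x ∈ comps S T :=
  mem_comps_iff.2 ⟨x, hx, rfl⟩

lemma nonempty_of_mem_comps {J : Finset ℕ} (hJ : J ∈ comps S T) : J.Nonempty := by
  obtain ⟨x, hx, rfl⟩ := mem_comps_iff.1 hJ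
  exact ⟨x, mem_compOf_self hx⟩

lemma subset_of_mem_comps {J : Finset ℕ} (hJ : J ∈ comps S T) : J ⊆ T := by
  obtain ⟨x, -, rfl⟩ := mem_comps_iff.1 hJ
  exact compOf_subset x

lemma comps_nodup : (comps S T).Nodup := List.nodup_dedup _

lemma disjoint_of_mem_comps (hST : Disjoint S T) {J J' : Finset ℕ} (hJ : J ∈ comps S T)
    (hJ' : J' ∈ comps S T) (hne : J ≠ J') : Disjoint J J' := by
  obtain ⟨x, hx, rfl⟩ := mem_comps_iff.1 hJ
  obtain ⟨y, hy, rfl⟩ := mem_comps_iff.1 hJ'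
  exact disjoint_left.2 fun w hw hw' =>
    hne ((compOf_eq_of_mem hST hx hw).symm.trans (compOf_eq_of_mem hST hy hw'))

lemma sum_card_comps (hST : Disjoint S T) : ((comps S T).map card).sum = T.card := by
  have hunion : (comps S T).toFinset.biUnion id = T := by
    ext z
    simp only [mem_biUnion, List.mem_toFinset, id]
    exact ⟨fun ⟨J, hJ, hz⟩ => subset_of_mem_comps hJ hz,
      fun hz => ⟨_, compOf_mem_comps hz, mem_compOf_self hz⟩⟩
  conv_rhs => rw [← hunion]
  rw [← List.sum_toFinset _ comps_nodup, card_biUnion]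
  · rfl
  exact fun J hJ J' hJ' => disjoint_of_mem_comps hST (List.mem_toFinset.1 hJ)
    (List.mem_toFinset.1 hJ')

lemma comps_empty (hT : T.Nonempty) : comps ∅ T = [T] := by
  have hconst : compOf ∅ T = fun _ => T := funext fun _ => filter_true_of_mem (by simp)
  rw [comps, hconst, List.map_const', List.replicate_dedup]
  simpa [length_sort] using hT.ne_empty

end Components

section ZeroBlock

variable {n : ℕ} {P : PartData} {B₀ : Finset ℕ}

lemma mem_range_sdiff_of_mem_block (hP : IsNCP n P) (hB₀ : B₀ ∈ P) {B : Finset ℕ}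
    (hB : B ∈ P) (hne : B ≠ B₀) {x : ℕ} (hx : x ∈ B) : x ∈ range n \ B₀ :=
  mem_sdiff.2 ⟨hP.2.2.1 ▸ subset_sup_id hB hx,
    disjoint_left.1 (hP.2.1 B hB B₀ hB₀ hne) hx⟩

/-- Since `B₀` contains `0`, a point of `B₀` between two points of another block `B`
would make `B₀` and `B` cross. -/
lemma not_separated_of_mem_block (hP : IsNCP n P) (hB₀ : B₀ ∈ P) (h0 : 0 ∈ B₀)
    {B : Finset ℕ} (hB : B ∈ P) (hne : B ≠ B₀) {x y : ℕ} (hx : x ∈ B) (hy : y ∈ B) :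
    ∀ s ∈ B₀, ¬ (min x y < s ∧ s < max x y) := by
  intro s hs hsep
  have hx0 : x ≠ 0 := fun hc => disjoint_left.1 (hP.2.1 B hB B₀ hB₀ hne) hx (hc ▸ h0)
  have hy0 : y ≠ 0 := fun hc => disjoint_left.1 (hP.2.1 B hB B₀ hB₀ hne) hy (hc ▸ h0)
  rcases le_total x y with hle | hle
  · have := hP.2.2.2 B₀ hB₀ B hB hne.symm 0 h0 s hs x hx y hy
    omega
  · have := hP.2.2.2 B₀ hB₀ B hB hne.symm 0 h0 s hs y hy x hx
    omega

lemma block_subset_of_mem_comps (hP : IsNCP n P) (hB₀ : B₀ ∈ P) (h0 : 0 ∈ B₀)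
    {B : Finset ℕ} (hB : B ∈ P) (hne : B ≠ B₀) {J : Finset ℕ}
    (hJ : J ∈ comps B₀ (range n \ B₀)) {x : ℕ} (hx : x ∈ B) (hxJ : x ∈ J) : B ⊆ J := by
  obtain ⟨z, hz, rfl⟩ := mem_comps_iff.1 hJ
  intro y hy
  rw [← compOf_eq_of_mem disjoint_sdiff_self_right hz hxJ]
  exact mem_filter.2 ⟨mem_range_sdiff_of_mem_block hP hB₀ hB hne hy,
    not_separated_of_mem_block hP hB₀ h0 hB hne hx hy⟩

lemma sup_blocks_of_mem_comps (hP : IsNCP n P) (hB₀ : B₀ ∈ P) (h0 : 0 ∈ B₀)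
    {J : Finset ℕ} (hJ : J ∈ comps B₀ (range n \ B₀)) :
    ((P.erase B₀).filter (· ⊆ J)).sup id = J := by
  refine le_antisymm (Finset.sup_le fun B hB => (mem_filter.1 hB).2) fun x hxJ => ?_
  have hxT := subset_of_mem_comps hJ hxJ
  obtain ⟨B, hB, hxB⟩ := mem_sup.1 (hP.2.2.1 ▸ (mem_sdiff.1 hxT).1 : x ∈ P.sup id)
  have hne : B ≠ B₀ := fun hc => (mem_sdiff.1 hxT).2 (hc ▸ hxB)
  exact mem_sup.2 ⟨B, mem_filter.2 ⟨mem_erase.2 ⟨hne, hB⟩,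
    block_subset_of_mem_comps hP hB₀ h0 hB hne hJ hxB hxJ⟩, hxB⟩

/-- Every block other than `B₀` lies in exactly one component. -/
lemma prod_comps_prod_blocks {M : Type*} [CommMonoid M] (hP : IsNCP n P) (hB₀ : B₀ ∈ P)
    (h0 : 0 ∈ B₀) (g : Finset ℕ → M) :
    ((comps B₀ (range n \ B₀)).map fun J => ∏ B ∈ (P.erase B₀).filter (· ⊆ J), g B).prod
      = ∏ B ∈ P.erase B₀, g B := by
  set C := comps B₀ (range n \ B₀)
  have hunion : C.toFinset.biUnion (fun J => (P.erase B₀).filter (· ⊆ J)) = P.erase B₀ := by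
    refine Subset.antisymm (biUnion_subset.2 fun J _ => filter_subset _ _) fun B hB => ?_
    obtain ⟨hne, hBP⟩ := mem_erase.1 hB
    obtain ⟨x, hx⟩ := hP.isNCFamily.nonempty hBP
    have hxT := mem_range_sdiff_of_mem_block hP hB₀ hBP hne hx
    exact mem_biUnion.2 ⟨_, List.mem_toFinset.2 (compOf_mem_comps hxT), mem_filter.2 ⟨hB,
      block_subset_of_mem_comps hP hB₀ h0 hBP hne (compOf_mem_comps hxT) hx
        (mem_compOf_self hxT)⟩⟩
  have hdisj : (C.toFinset : Set (Finset ℕ)).PairwiseDisjoint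
      (fun J => (P.erase B₀).filter (· ⊆ J)) := by
    intro J hJ J' hJ' hne
    have hJJ' := disjoint_of_mem_comps disjoint_sdiff_self_right
      (List.mem_toFinset.1 hJ) (List.mem_toFinset.1 hJ') hne
    refine disjoint_left.2 fun B hB hB' => ?_
    obtain ⟨x, hx⟩ := hP.isNCFamily.nonempty (mem_of_mem_erase (mem_filter.1 hB).1)
    exact disjoint_left.1 hJJ' ((mem_filter.1 hB).2 hx) ((mem_filter.1 hB').2 hx)
  rw [← List.prod_toFinset _ comps_nodup, ← prod_biUnion hdisj, hunion]

lemma adm_singleton_of_zero_mem (h0 : 0 ∈ B₀) (U : PartData) : Adm {B₀} U := by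
  intro q hq u _ hnest
  obtain ⟨⟨a, _, ha⟩, -⟩ := hnest 0 (mem_singleton.1 hq ▸ h0)
  omega

end ZeroBlock

section Words

variable {K : Type*} [Field K] {A : Type*} [Ring A] [Algebra K A]

lemma twrd_congr (m : ℕ) {a b : ℕ → A} (h : ∀ j < m, a j = b j) :
    twrd K A m a = twrd K A m b := by
  cases m with
  | zero => rfl
  | succ k => exact congrArg (DirectSum.of _ k) (congrArg _ (funext fun i => h i i.isLt))

lemma dgen_congr (P : PartData) (m : ℕ) {a b : ℕ → A} (h : ∀ j < m, a j = b j) :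
    dgen K A P m a = dgen K A P m b := by
  cases m with
  | zero => rfl
  | succ k =>
    exact congrArg (TensorAlgebra.ι K)
      (congrArg (DirectSum.of _ (P, k)) (congrArg _ (funext fun i => h i i.isLt)))

lemma dsub_eq_dgen (a : ℕ → A) (P' : PartData) (S : Finset ℕ) :
    dsub K A a P' S = dgen K A P' S.card (restrictDec a S) := rfl

lemma dsub_range (n : ℕ) (P : PartData) (a : ℕ → A) :
    dsub K A a P (range n) = dgen K A P n a := by
  rw [dsub_eq_dgen, card_range]
  exact dgen_congr P n fun j hj => restrictDec_range a hj

lemma exists_dsub_eq_ι (a : ℕ → A) (P' : PartData) {S : Finset ℕ} (hS : S.Nonempty) :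
    ∃ v, dsub K A a P' S = TensorAlgebra.ι K v := by
  obtain ⟨k, hk⟩ := Nat.exists_eq_add_one.2 hS.card_pos
  rw [dsub_eq_dgen, hk]
  exact ⟨_, rfl⟩

variable (K A) in
def dword (l : List (PartData × ℕ × (ℕ → A))) : TNA K A :=
  (l.map fun t => dgen K A t.1 t.2.1 t.2.2).prod

def IsNCWordData {α : Type*} (l : List (PartData × ℕ × α)) : Prop :=
  ∀ t ∈ l, 1 ≤ t.2.1 ∧ IsNCP t.2.1 t.1

lemma IsNCWordData.append {α : Type*} {l l' : List (PartData × ℕ × α)} (hl : IsNCWordData l)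
    (hl' : IsNCWordData l') : IsNCWordData (l ++ l') := by
  intro t ht
  rcases List.mem_append.1 ht with h | h
  exacts [hl t h, hl' t h]

lemma dword_append (l l' : List (PartData × ℕ × (ℕ → A))) :
    dword K A (l ++ l') = dword K A l * dword K A l' := by
  rw [dword, List.map_append, List.prod_append]; rfl

lemma dword_cons (P : PartData) (m : ℕ) (a : ℕ → A) (l : List (PartData × ℕ × (ℕ → A))) :
    dword K A ((P, m, a) :: l) = dgen K A P m a * dword K A l := by
  rw [dword, List.map_cons, List.prod_cons]; rfl

lemma dword_mem_DWordPos {l : List (PartData × ℕ × (ℕ → A))} (hne : l ≠ [])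
    (hl : IsNCWordData l) : dword K A l ∈ DWordPos K A :=
  ⟨l, hne, hl, rfl⟩

lemma dgen_mem_DWordPos {P : PartData} {m : ℕ} (a : ℕ → A) (h1 : 1 ≤ m) (h2 : IsNCP m P) :
    dgen K A P m a ∈ DWordPos K A := by
  simpa [dword] using dword_mem_DWordPos (K := K) (List.cons_ne_nil (P, m, a) [])
    (by simp [IsNCWordData, h1, h2])

lemma mul_mem_DWordPos {x y : TNA K A} (hx : x ∈ DWordPos K A) (hy : y ∈ DWordPos K A) :
    x * y ∈ DWordPos K A := by
  obtain ⟨l, hl, h, rfl⟩ := hx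
  obtain ⟨l', -, h', rfl⟩ := hy
  exact ⟨l ++ l', by simp [hl], IsNCWordData.append h h', (dword_append l l').symm⟩

variable (K A) in
/-- Everything in a coproduct `Δ x` except the term `1 ⊗ x` lies here. -/
def leftAugSpan : Submodule K (TNA K A ⊗[K] TNA K A) :=
  Submodule.span K {z | ∃ p q, p ∈ DWordPos K A ∧ z = p ⊗ₜ[K] q}

lemma tmul_mem_leftAugSpan {p : TNA K A} (hp : p ∈ DWordPos K A) (q : TNA K A) :
    p ⊗ₜ[K] q ∈ leftAugSpan K A :=
  Submodule.subset_span ⟨p, q, hp, rfl⟩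

lemma map_mem_of_mem_leftAugSpan {M : Type*} [AddCommMonoid M] [Module K M]
    {N : Submodule K M} (f : TNA K A ⊗[K] TNA K A →ₗ[K] M)
    (hf : ∀ p ∈ DWordPos K A, ∀ q, f (p ⊗ₜ[K] q) ∈ N) {z : TNA K A ⊗[K] TNA K A}
    (hz : z ∈ leftAugSpan K A) : f z ∈ N :=
  (Submodule.span_le (p := N.comap f)).2 (by rintro _ ⟨p, q, hp, rfl⟩; exact hf p hp q) hz

lemma one_tmul_mul_mem_leftAugSpan (c : TNA K A) {z : TNA K A ⊗[K] TNA K A}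
    (hz : z ∈ leftAugSpan K A) : (1 ⊗ₜ[K] c) * z ∈ leftAugSpan K A :=
  map_mem_of_mem_leftAugSpan (LinearMap.mulLeft K ((1 : TNA K A) ⊗ₜ[K] c)) (fun p hp q => by
    simpa using tmul_mem_leftAugSpan hp (c * q)) hz

lemma mul_one_tmul_mem_leftAugSpan (c : TNA K A) {z : TNA K A ⊗[K] TNA K A}
    (hz : z ∈ leftAugSpan K A) : z * (1 ⊗ₜ[K] c) ∈ leftAugSpan K A :=
  map_mem_of_mem_leftAugSpan (LinearMap.mulRight K ((1 : TNA K A) ⊗ₜ[K] c)) (fun p hp q => by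
    simpa using tmul_mem_leftAugSpan hp (q * c)) hz

lemma mul_mem_leftAugSpan {z w : TNA K A ⊗[K] TNA K A} (hz : z ∈ leftAugSpan K A)
    (hw : w ∈ leftAugSpan K A) : z * w ∈ leftAugSpan K A :=
  map_mem_of_mem_leftAugSpan (LinearMap.mulRight K w) (fun p hp q =>
    map_mem_of_mem_leftAugSpan (LinearMap.mulLeft K (p ⊗ₜ[K] q)) (fun p' hp' q' => by
      simpa using tmul_mem_leftAugSpan (mul_mem_DWordPos hp hp') (q * q')) hw) hz

/-- Only the summand `Q = ∅` of the coproduct has an empty left factor. -/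
lemma dcopF_sub_one_tmul_mem_leftAugSpan {m : ℕ} {P : PartData} (h : IsNCP (m + 1) P)
    (a : ℕ → A) : dcopF K A P a - 1 ⊗ₜ[K] dgen K A P (m + 1) a ∈ leftAugSpan K A := by
  have hempty : ∅ ∈ P.powerset.filter (fun Q => Adm Q (P \ Q)) :=
    mem_filter.2 ⟨empty_mem_powerset P, fun q hq => absurd hq (notMem_empty q)⟩
  have hrange : (range (m + 1)).Nonempty := nonempty_range_iff.2 m.succ_ne_zero
  rw [dcopF, ← add_sum_erase _ _ hempty]
  simp only [sup_empty, bot_eq_empty, sdiff_empty, h.2.2.1, comps_empty hrange,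
    List.map_cons, List.map_nil, List.prod_cons, List.prod_nil, mul_one,
    filter_true_of_mem fun B hB => h.2.2.1 ▸ subset_sup_id hB,
    stdParts_of_sup_eq_range h.2.2.1, dsub_range]
  rw [dsub_eq_dgen, card_empty, dgen, add_sub_cancel_left]
  refine Submodule.sum_mem _ fun Q hQ => tmul_mem_leftAugSpan ?_ _
  obtain ⟨hQne, hQ⟩ := mem_erase.1 hQ
  have hfam := h.isNCFamily.mono (mem_powerset.1 (mem_filter.1 hQ).1)
  obtain ⟨B, hB⟩ := nonempty_iff_ne_empty.2 hQne
  obtain ⟨x, hx⟩ := hfam.nonempty hB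
  exact dgen_mem_DWordPos _ (card_pos.2 ⟨x, subset_sup_id hB hx⟩) hfam.isNCP_stdParts

lemma coproduct_dword_sub_one_tmul_mem_leftAugSpan
    {Δ : TNA K A →ₐ[K] TNA K A ⊗[K] TNA K A}
    (hΔ : ∀ (m : ℕ) (P : PartData) (a : ℕ → A), IsNCP m P →
      Δ (dgen K A P m a) = dcopF K A P a)
    {l : List (PartData × ℕ × (ℕ → A))} (hl : IsNCWordData l) :
    Δ (dword K A l) - 1 ⊗ₜ[K] dword K A l ∈ leftAugSpan K A := by
  induction l with
  | nil => simp [dword, Algebra.TensorProduct.one_def]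
  | cons t rest ih =>
    obtain ⟨P, m, a⟩ := t
    obtain ⟨h1, hP⟩ := hl _ List.mem_cons_self
    obtain ⟨k, rfl⟩ := Nat.exists_eq_add_of_le' h1
    set E := Δ (dword K A rest) - 1 ⊗ₜ[K] dword K A rest
    set E₀ := dcopF K A P a - 1 ⊗ₜ[K] dgen K A P (k + 1) a
    have hE : E ∈ leftAugSpan K A := ih fun u hu => hl u (List.mem_cons_of_mem _ hu)
    have hE₀ : E₀ ∈ leftAugSpan K A := dcopF_sub_one_tmul_mem_leftAugSpan hP a
    have hexp : Δ (dword K A ((P, k + 1, a) :: rest))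
          - 1 ⊗ₜ[K] dword K A ((P, k + 1, a) :: rest)
        = (1 ⊗ₜ[K] dgen K A P (k + 1) a) * E + E₀ * (1 ⊗ₜ[K] dword K A rest) + E₀ * E := by
      rw [dword_cons, map_mul, hΔ _ _ _ hP, eq_add_of_sub_eq (rfl : _ = E₀),
        eq_add_of_sub_eq (rfl : _ = E)]
      simp only [add_mul, mul_add, Algebra.TensorProduct.tmul_mul_tmul, one_mul]
      abel
    rw [hexp]
    exact add_mem (add_mem (one_tmul_mul_mem_leftAugSpan _ hE) (mul_one_tmul_mem_leftAugSpan _ hE₀))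
      (mul_mem_leftAugSpan hE₀ hE)

end Words

section Evaluation

variable {K : Type*} [Field K] {A : Type*} [Ring A] [Algebra K A]

/-- The multiplicative extension `κ^L(a) = ∏_i κ(a_{L_i})`. -/
noncomputable def blockProd (κ : Tpos K A →ₗ[K] K) (P : PartData) (a : ℕ → A) : K :=
  ∏ B ∈ P, κ (twrd K A B.card (restrictDec a B))

lemma blockProd_stdParts (κ : Tpos K A →ₗ[K] K) (a : ℕ → A) {R : PartData}
    (hR : IsNCFamily R) : blockProd κ (stdParts R) (restrictDec a (R.sup id)) = blockProd κ R a := by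
  rw [blockProd, stdParts, prod_image hR.injOn_image_rk]
  refine prod_congr rfl fun B hB => ?_
  have hBJ := subset_sup_id hB
  rw [card_image_of_injOn ((rk_injOn _).mono hBJ)]
  exact congrArg κ (twrd_congr _ fun j hj => restrictDec_image_rk a hBJ hj)

/-- The letters `st(J_i) ⊗ a_{J_i}` of the components `J_i` of the complement of `B₀`. -/
def compLetters {α : Type*} (P : PartData) (B₀ : Finset ℕ) (a : ℕ → α) :
    List (PartData × ℕ × (ℕ → α)) :=
  (comps B₀ (P.sup id \ B₀)).map fun J =>
    (stdParts ((P.erase B₀).filter (· ⊆ J)), J.card, restrictDec a J)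

section CompLetters

variable {n : ℕ} {P : PartData} {B₀ : Finset ℕ}

lemma isNCWordData_compLetters {α : Type*} (hP : IsNCP n P) (hB₀ : B₀ ∈ P) (h0 : 0 ∈ B₀)
    (a : ℕ → α) :
    IsNCWordData (compLetters P B₀ a) := by
  rintro _ ht
  obtain ⟨J, hJ, rfl⟩ := List.mem_map.1 ht
  rw [hP.2.2.1] at hJ
  have hfam : IsNCFamily ((P.erase B₀).filter (· ⊆ J)) :=
    hP.isNCFamily.mono ((filter_subset _ _).trans (erase_subset B₀ P))
  refine ⟨(nonempty_of_mem_comps hJ).card_pos, ?_⟩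
  simpa only [sup_blocks_of_mem_comps hP hB₀ h0 hJ] using hfam.isNCP_stdParts

lemma sum_card_compLetters {α : Type*} (a : ℕ → α) :
    ((compLetters P B₀ a).map fun t => t.2.1).sum = (P.sup id \ B₀).card := by
  rw [compLetters, List.map_map]
  exact sum_card_comps disjoint_sdiff_self_right

lemma prod_blockProd_compLetters (hP : IsNCP n P) (hB₀ : B₀ ∈ P) (h0 : 0 ∈ B₀)
    (κ : Tpos K A →ₗ[K] K) (a : ℕ → A) :
    ((compLetters P B₀ a).map fun t => blockProd κ t.1 t.2.2).prod
      = blockProd κ (P.erase B₀) a := by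
  rw [compLetters, List.map_map, blockProd,
    ← prod_comps_prod_blocks hP hB₀ h0, hP.2.2.1]
  refine congrArg List.prod (List.map_congr_left fun J hJ => ?_)
  have hfam : IsNCFamily ((P.erase B₀).filter (· ⊆ J)) :=
    hP.isNCFamily.mono ((filter_subset _ _).trans (erase_subset B₀ P))
  have h := blockProd_stdParts κ a hfam
  rwa [sup_blocks_of_mem_comps hP hB₀ h0 hJ] at h

end CompLetters

/-- `convD K A D f g = evalTensor f g ∘ₗ D`. -/
noncomputable def evalTensor (f g : TNA K A →ₗ[K] K) : TNA K A ⊗[K] TNA K A →ₗ[K] K :=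
  LinearMap.mul' K K ∘ₗ TensorProduct.map f g

@[simp]
lemma evalTensor_tmul (f g : TNA K A →ₗ[K] K) (x y : TNA K A) :
    evalTensor f g (x ⊗ₜ[K] y) = f x * g y := rfl

lemma evalTensor_ι_tmul_mul_eq_zero {F : TNA K A →ₗ[K] K}
    (hFprod : ∀ (v : NCA K A), ∀ y ∈ DIdeal K A, F (TensorAlgebra.ι K v * y) = 0)
    (G : TNA K A →ₗ[K] K) (v : NCA K A) (w : TNA K A) {z : TNA K A ⊗[K] TNA K A}
    (hz : z ∈ leftAugSpan K A) : evalTensor F G ((TensorAlgebra.ι K v ⊗ₜ[K] w) * z) = 0 :=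
  (Submodule.mem_bot K).1 <| map_mem_of_mem_leftAugSpan
    (evalTensor F G ∘ₗ LinearMap.mulLeft K (TensorAlgebra.ι K v ⊗ₜ[K] w)) (fun p hp q => by
      simp [hFprod v p (Submodule.subset_span hp)]) hz

lemma evalTensor_dcopP_mul_eq_zero {F : TNA K A →ₗ[K] K}
    (hFprod : ∀ (v : NCA K A), ∀ y ∈ DIdeal K A, F (TensorAlgebra.ι K v * y) = 0)
    (G : TNA K A →ₗ[K] K) (P : PartData) (a : ℕ → A)
    {z : TNA K A ⊗[K] TNA K A} (hz : z ∈ leftAugSpan K A) :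
    evalTensor F G (dcopP K A P a * z) = 0 := by
  rw [dcopP, sum_mul, map_sum]
  refine sum_eq_zero fun Q hQ => ?_
  obtain ⟨hQP, -, q, hq, hq0⟩ := mem_filter.1 hQ
  obtain ⟨v, hv⟩ := exists_dsub_eq_ι (K := K) a (stdParts Q) ⟨0, subset_sup_id hq hq0⟩
  rw [hv]
  exact evalTensor_ι_tmul_mul_eq_zero hFprod G v _ hz

variable {κ : Tpos K A →ₗ[K] K} {F : TNA K A →ₗ[K] K}

lemma apply_dsub_stdParts_of_one_lt_card
    (hFsd : ∀ (k : ℕ) (P : PartData) (a : ℕ → A), IsNCP (k + 1) P →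
      F (dgen K A P (k + 1) a) = if P = {range (k + 1)} then κ (twrd K A (k + 1) a) else 0)
    {Q : PartData} (hQ : IsNCFamily Q) (hcard : 1 < Q.card) (a : ℕ → A) :
    F (dsub K A a (stdParts Q) (Q.sup id)) = 0 := by
  obtain ⟨B, hB⟩ := card_pos.1 (zero_lt_one.trans hcard)
  obtain ⟨x, hx⟩ := hQ.nonempty hB
  obtain ⟨k, hk⟩ := Nat.exists_eq_add_one.2 (card_pos.2 ⟨x, subset_sup_id hB hx⟩)
  have hncp : IsNCP (k + 1) (stdParts Q) := hk ▸ hQ.isNCP_stdParts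
  have hnot : stdParts Q ≠ {range (k + 1)} := fun h => by
    have := hQ.card_stdParts
    rw [h, card_singleton] at this
    omega
  rw [dsub_eq_dgen, hk, hFsd k _ _ hncp, if_neg hnot]

lemma apply_dsub_singleton_range
    (hFsd : ∀ (k : ℕ) (P : PartData) (a : ℕ → A), IsNCP (k + 1) P →
      F (dgen K A P (k + 1) a) = if P = {range (k + 1)} then κ (twrd K A (k + 1) a) else 0)
    {B : Finset ℕ} (hB : B.Nonempty) (a : ℕ → A) :
    F (dsub K A a {range B.card} B) = κ (twrd K A B.card (restrictDec a B)) := by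
  obtain ⟨k, hk⟩ := Nat.exists_eq_add_one.2 hB.card_pos
  rw [dsub_eq_dgen, hk, hFsd k _ _ (isNCP_singleton_range k), if_pos rfl]

/-- In `Δ_≺⁺` only the summand `Q = {B₀}` survives `sd(κ)`: every other admissible `Q`
containing `B₀` has at least two blocks. -/
lemma evalTensor_dcopP_mul_one_tmul
    (hFsd : ∀ (k : ℕ) (P : PartData) (a : ℕ → A), IsNCP (k + 1) P →
      F (dgen K A P (k + 1) a) = if P = {range (k + 1)} then κ (twrd K A (k + 1) a) else 0)
    (G : TNA K A →ₗ[K] K) {n : ℕ} {P : PartData} (hP : IsNCP n P) {B₀ : Finset ℕ}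
    (hB₀ : B₀ ∈ P) (h0 : 0 ∈ B₀) (a : ℕ → A) (y : TNA K A) :
    evalTensor F G (dcopP K A P a * (1 ⊗ₜ[K] y))
      = κ (twrd K A B₀.card (restrictDec a B₀)) * G (dword K A (compLetters P B₀ a) * y) := by
  have hmem : ({B₀} : PartData) ∈ P.powerset.filter
      (fun Q => Adm Q (P \ Q) ∧ ∃ q ∈ Q, 0 ∈ q) :=
    mem_filter.2 ⟨mem_powerset.2 (singleton_subset_iff.2 hB₀),
      adm_singleton_of_zero_mem h0 _, B₀, mem_singleton_self _, h0⟩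
  rw [dcopP, sum_mul, map_sum, sum_eq_single_of_mem _ hmem]
  · simp only [Algebra.TensorProduct.tmul_mul_tmul, mul_one, evalTensor_tmul, sup_singleton,
      id, stdParts_singleton, apply_dsub_singleton_range hFsd ⟨0, h0⟩,
      sdiff_singleton_eq_erase]
    rw [dword, compLetters, List.map_map]
    rfl
  intro Q hQ hne
  obtain ⟨hQP, -, q, hq, hq0⟩ := mem_filter.1 hQ
  have hQP := mem_powerset.1 hQP
  obtain rfl : q = B₀ := by_contra fun hqB =>
    disjoint_left.1 (hP.2.1 q (hQP hq) B₀ hB₀ hqB) hq0 h0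
  have hcard : 1 < Q.card := (one_lt_card_iff_nontrivial.2
    ((nontrivial_iff_ne_singleton hq).2 hne))
  rw [Algebra.TensorProduct.tmul_mul_tmul, mul_one, evalTensor_tmul,
    apply_dsub_stdParts_of_one_lt_card hFsd (hP.isNCFamily.mono hQP) hcard, zero_mul]

end Evaluation

section Solution

variable {K : Type*} [Field K] {A : Type*} [Ring A] [Algebra K A]
  {Δ : TNA K A →ₐ[K] TNA K A ⊗[K] TNA K A} {Δp : TNA K A →ₗ[K] TNA K A ⊗[K] TNA K A}
  {κ : Tpos K A →ₗ[K] K} {F Ψ : TNA K A →ₗ[K] K}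

/-- One step of the recursion `Ψ = e + sd(κ) ≺ Ψ` on a word whose first letter is `P`:
the block `B₀` of `0` is evaluated by `κ`, and its complementary components become new
letters. -/
lemma apply_dgen_mul_dword
    (hΔ : ∀ (m : ℕ) (P : PartData) (a : ℕ → A), IsNCP m P →
      Δ (dgen K A P m a) = dcopF K A P a)
    (hpgen : ∀ (m : ℕ) (P : PartData) (a : ℕ → A), IsNCP m P →
      Δp (dgen K A P m a) = dcopP K A P a)
    (hpext : ∀ (v : NCA K A) (y : TNA K A),
      Δp (TensorAlgebra.ι K v * y) = Δp (TensorAlgebra.ι K v) * Δ y)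
    (hFsd : ∀ (k : ℕ) (P : PartData) (a : ℕ → A), IsNCP (k + 1) P →
      F (dgen K A P (k + 1) a) = if P = {range (k + 1)} then κ (twrd K A (k + 1) a) else 0)
    (hFprod : ∀ (v : NCA K A), ∀ y ∈ DIdeal K A, F (TensorAlgebra.ι K v * y) = 0)
    (hΨfix : ∀ x ∈ DIdeal K A, Ψ x = convD K A Δp F Ψ x)
    {m : ℕ} {P : PartData} (hP : IsNCP (m + 1) P) {B₀ : Finset ℕ} (hB₀ : B₀ ∈ P)
    (h0 : 0 ∈ B₀) (a : ℕ → A) {l : List (PartData × ℕ × (ℕ → A))} (hl : IsNCWordData l) :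
    Ψ (dgen K A P (m + 1) a * dword K A l)
      = κ (twrd K A B₀.card (restrictDec a B₀)) * Ψ (dword K A (compLetters P B₀ a ++ l)) := by
  have hmem : dgen K A P (m + 1) a * dword K A l ∈ DIdeal K A := by
    rw [← dword_cons]
    refine Submodule.subset_span (dword_mem_DWordPos (List.cons_ne_nil _ _) fun t ht => ?_)
    rcases List.mem_cons.1 ht with rfl | ht
    exacts [⟨m.succ_pos, hP⟩, hl t ht]
  have hι : dgen K A P (m + 1) a = TensorAlgebra.ι K (dvec K A P m a) := rfl
  rw [hΨfix _ hmem, show convD K A Δp F Ψ = evalTensor F Ψ ∘ₗ Δp from rfl,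
    LinearMap.comp_apply, hι, hpext, ← hι, hpgen _ _ _ hP,
    ← add_sub_cancel (1 ⊗ₜ[K] dword K A l) (Δ (dword K A l)), mul_add, map_add,
    evalTensor_dcopP_mul_eq_zero hFprod Ψ P a
      (coproduct_dword_sub_one_tmul_mem_leftAugSpan hΔ hl), add_zero,
    evalTensor_dcopP_mul_one_tmul hFsd Ψ hP hB₀ h0, dword_append]

/-- Induction on the total length of the decorations. -/
lemma apply_dword
    (hΔ : ∀ (m : ℕ) (P : PartData) (a : ℕ → A), IsNCP m P →
      Δ (dgen K A P m a) = dcopF K A P a)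
    (hpgen : ∀ (m : ℕ) (P : PartData) (a : ℕ → A), IsNCP m P →
      Δp (dgen K A P m a) = dcopP K A P a)
    (hpext : ∀ (v : NCA K A) (y : TNA K A),
      Δp (TensorAlgebra.ι K v * y) = Δp (TensorAlgebra.ι K v) * Δ y)
    (hFsd : ∀ (k : ℕ) (P : PartData) (a : ℕ → A), IsNCP (k + 1) P →
      F (dgen K A P (k + 1) a) = if P = {range (k + 1)} then κ (twrd K A (k + 1) a) else 0)
    (hFprod : ∀ (v : NCA K A), ∀ y ∈ DIdeal K A, F (TensorAlgebra.ι K v * y) = 0)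
    (hΨ1 : Ψ 1 = 1) (hΨfix : ∀ x ∈ DIdeal K A, Ψ x = convD K A Δp F Ψ x)
    {l : List (PartData × ℕ × (ℕ → A))} (hl : IsNCWordData l) :
    Ψ (dword K A l) = (l.map fun t => blockProd κ t.1 t.2.2).prod := by
  induction hw : (l.map fun t => t.2.1).sum using Nat.strong_induction_on generalizing l with
  | _ N ih =>
  match l, hl with
  | [], _ => simpa [dword] using hΨ1
  | (P, m, a) :: rest, hl =>
    obtain ⟨h1, hP⟩ := hl _ List.mem_cons_self
    obtain ⟨k, rfl⟩ := Nat.exists_eq_add_of_le' h1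
    have hrest : IsNCWordData rest := fun t ht => hl t (List.mem_cons_of_mem _ ht)
    obtain ⟨B₀, hB₀, h0⟩ : ∃ B₀ ∈ P, 0 ∈ B₀ :=
      mem_sup.1 (hP.2.2.1 ▸ mem_range.2 k.succ_pos : 0 ∈ P.sup id)
    have hlt : ((compLetters P B₀ a ++ rest).map fun t => t.2.1).sum < N := by
      have hsub : B₀ ⊆ range (k + 1) := hP.2.2.1 ▸ subset_sup_id hB₀
      have hpos := card_pos.2 ⟨0, h0⟩
      rw [← hw, List.map_append, List.sum_append, sum_card_compLetters, hP.2.2.1,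
        card_sdiff_of_subset hsub, card_range, List.map_cons, List.sum_cons]
      dsimp only
      omega
    rw [dword_cons, apply_dgen_mul_dword hΔ hpgen hpext hFsd hFprod hΨfix hP hB₀ h0 a hrest,
      ih _ hlt ((isNCWordData_compLetters hP hB₀ h0 a).append hrest) rfl, List.map_append,
      List.prod_append, prod_blockProd_compLetters hP hB₀ h0, List.map_cons, List.prod_cons]
    dsimp only
    rw [← mul_assoc, blockProd, blockProd, mul_prod_erase P (fun B => κ (twrd K A B.card (restrictDec a B))) hB₀]

end Solution

theorem standard_section_solution_computes_multiplicative_extension_general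
    (K : Type*) [Field K] (A : Type*) [Ring A] [Algebra K A]
    (Δ : TNA K A →ₐ[K] TNA K A ⊗[K] TNA K A)
    (hΔ : ∀ (m : ℕ) (P : PartData) (a : ℕ → A), IsNCP m P →
      Δ (dgen K A P m a) = dcopF K A P a)
    (Δp : TNA K A →ₗ[K] TNA K A ⊗[K] TNA K A)
    (hpgen : ∀ (m : ℕ) (P : PartData) (a : ℕ → A), IsNCP m P →
      Δp (dgen K A P m a) = dcopP K A P a)
    (hpext : ∀ (v : NCA K A) (y : TNA K A),
      Δp (TensorAlgebra.ι K v * y) = Δp (TensorAlgebra.ι K v) * Δ y)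
    -- κ, a linear form on T(A)
    (κ : Tpos K A →ₗ[K] K)
    -- the standard section sd(κ) on NC(A)
    (s : NCA K A →ₗ[K] K)
    (hsd : ∀ (k : ℕ) (P : PartData) (a : ℕ → A), IsNCP (k + 1) P →
      s (dvec K A P k a)
        = if P = {Finset.range (k + 1)} then κ (twrd K A (k + 1) a) else 0)
    -- sd(κ) extended as an infinitesimal character to T̄(NC(A))
    (F : TNA K A →ₗ[K] K)
    (hFgen : ∀ v : NCA K A, F (TensorAlgebra.ι K v) = s v)
    (hFprod : ∀ (v : NCA K A), ∀ y ∈ DIdeal K A, F (TensorAlgebra.ι K v * y) = 0)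
    -- Ψ, the solution of Ψ = e + sd(κ) ≺ Ψ
    (Ψ : TNA K A →ₗ[K] K)
    (hΨ1 : Ψ 1 = 1)
    (hΨfix : ∀ x ∈ DIdeal K A, Ψ x = convD K A Δp F Ψ x) :
    -- Ψ(L ⊗ (a₁⋯aₙ)) = Π_{blocks} κ(a_{L_i})
    (∀ (m : ℕ) (P : PartData) (a : ℕ → A), IsNCP (m + 1) P →
      Ψ (dgen K A P (m + 1) a)
        = ∏ B ∈ P, κ (twrd K A B.card fun j => a ((B.sort (· ≤ ·)).getD j 0))) ∧
    -- Ψ(Sp(a₁⋯aₙ)) = Σ_{L ∈ NC_n} κ^L(a₁⋯aₙ) ( = φ(a₁⋯aₙ) )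
    (∀ (m : ℕ) (a : ℕ → A),
      Ψ (spWord K A (m + 1) a)
        = ∑ P ∈ NCset (m + 1),
            ∏ B ∈ P, κ (twrd K A B.card fun j => a ((B.sort (· ≤ ·)).getD j 0))) := by
  have hFsd : ∀ (k : ℕ) (P : PartData) (a : ℕ → A), IsNCP (k + 1) P →
      F (dgen K A P (k + 1) a) = if P = {range (k + 1)} then κ (twrd K A (k + 1) a) else 0 :=
    fun k P a hP => (hFgen _).trans (hsd k P a hP)
  have hletter : ∀ (m : ℕ) (P : PartData) (a : ℕ → A), IsNCP (m + 1) P →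
      Ψ (dgen K A P (m + 1) a) = blockProd κ P a := fun m P a hP => by
    simpa [dword] using apply_dword hΔ hpgen hpext hFsd hFprod hΨ1 hΨfix
      (l := [(P, m + 1, a)]) (by simp [IsNCWordData, hP])
  refine ⟨hletter, fun m a => ?_⟩
  rw [spWord, map_sum]
  exact sum_congr rfl fun P hP => hletter m P a (mem_filter.1 hP).2

/-- Let `κ` be a linear form on `T(A)`, `sd(κ)` its standard section on
`NC(A)` (equal to `κ(a₁⋯aₙ)` on the one-block partition decorated by `a₁⋯aₙ` and `0` on
all other non-crossing partitions), extended to an infinitesimal character on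
`T̄(NC(A))`, and let `Ψ` be the solution of `Ψ = e + sd(κ) ≺ Ψ`.  Then for every
non-crossing partition `L = {L₁,…,L_k}` of `[n]` and all decorations:
`Ψ(L ⊗ (a₁⋯aₙ)) = Π_i κ(a_{L_i})`, and consequently
`Ψ(Sp(a₁⋯aₙ)) = Σ_{L ∈ NC_n} κ^L(a₁⋯aₙ)`. -/
theorem standard_section_solution_computes_multiplicative_extension
    (K : Type*) [Field K] [CharZero K] (A : Type*) [Ring A] [Algebra K A]
    (Δ : TNA K A →ₐ[K] TNA K A ⊗[K] TNA K A)
    (hΔ : ∀ (m : ℕ) (P : PartData) (a : ℕ → A), IsNCP m P →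
      Δ (dgen K A P m a) = dcopF K A P a)
    (Δp : TNA K A →ₗ[K] TNA K A ⊗[K] TNA K A)
    (hpgen : ∀ (m : ℕ) (P : PartData) (a : ℕ → A), IsNCP m P →
      Δp (dgen K A P m a) = dcopP K A P a)
    (hpext : ∀ (v : NCA K A) (y : TNA K A),
      Δp (TensorAlgebra.ι K v * y) = Δp (TensorAlgebra.ι K v) * Δ y)
    -- κ, a linear form on T(A)
    (κ : Tpos K A →ₗ[K] K)
    -- the standard section sd(κ) on NC(A)
    (s : NCA K A →ₗ[K] K)
    (hsd : ∀ (k : ℕ) (P : PartData) (a : ℕ → A), IsNCP (k + 1) P →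
      s (dvec K A P k a)
        = if P = {Finset.range (k + 1)} then κ (twrd K A (k + 1) a) else 0)
    -- sd(κ) extended as an infinitesimal character to T̄(NC(A))
    (F : TNA K A →ₗ[K] K)
    (hF1 : F 1 = 0)
    (hFgen : ∀ v : NCA K A, F (TensorAlgebra.ι K v) = s v)
    (hFprod : ∀ (v : NCA K A), ∀ y ∈ DIdeal K A, F (TensorAlgebra.ι K v * y) = 0)
    -- Ψ, the solution of Ψ = e + sd(κ) ≺ Ψ
    (Ψ : TNA K A →ₗ[K] K)
    (hΨ1 : Ψ 1 = 1)
    (hΨfix : ∀ x ∈ DIdeal K A, Ψ x = convD K A Δp F Ψ x) :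
    -- Ψ(L ⊗ (a₁⋯aₙ)) = Π_{blocks} κ(a_{L_i})
    (∀ (m : ℕ) (P : PartData) (a : ℕ → A), IsNCP (m + 1) P →
      Ψ (dgen K A P (m + 1) a)
        = ∏ B ∈ P, κ (twrd K A B.card fun j => a ((B.sort (· ≤ ·)).getD j 0))) ∧
    -- Ψ(Sp(a₁⋯aₙ)) = Σ_{L ∈ NC_n} κ^L(a₁⋯aₙ) ( = φ(a₁⋯aₙ) )
    (∀ (m : ℕ) (a : ℕ → A),
      Ψ (spWord K A (m + 1) a)
        = ∑ P ∈ NCset (m + 1),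
            ∏ B ∈ P, κ (twrd K A B.card fun j => a ((B.sort (· ≤ ·)).getD j 0))) :=
  standard_section_solution_computes_multiplicative_extension_general K A Δ hΔ Δp hpgen hpext κ s
    hsd F hFgen hFprod Ψ hΨ1 hΨfix
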